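/- For any coalgebra C over a field k, the subspace I₁(C) is a coideal of C: the counit ε vanishes on I₁(C), and Δ(I₁(C)) ⊆ I₁(C) ⊗ C + C ⊗ I₁(C). (Hence the quotient C^[1] = C/I₁(C) carries a unique coalgebra structure making the projection C → C^[1] a coalgebra morphism.) -/

import Mathlib

open TensorProduct

/-- `I₁(C)`: the subspace of a coalgebra `C` spanned by the elements
`φ(x₁)·x₂ − φ(x₂)·x₁` for `x ∈ C` and linear forms `φ : C → k`. -/
noncomputable def lazySubspace (k : Type*) [Field k] (C : Type*)
    [AddCommGroup C] [Module k C] [Coalgebra k C] : Submodule k C :=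
  Submodule.span k {y : C | ∃ (x : C) (φ : C →ₗ[k] k),
    y = (TensorProduct.lid k C)
          (TensorProduct.map φ LinearMap.id (Coalgebra.comul x))
      - (TensorProduct.rid k C)
          (TensorProduct.map LinearMap.id φ (Coalgebra.comul x))}

/-!
Write `φ ⇀ x = φ(x₁) x₂` and `x ↼ φ = φ(x₂) x₁`. Coassociativity gives
`Δ(φ ⇀ x) = (φ ⇀ x₁) ⊗ x₂`, `Δ(x ↼ φ) = x₁ ⊗ (x₂ ↼ φ)` and `(x₁ ↼ φ) ⊗ x₂ = x₁ ⊗ (φ ⇀ x₂)`,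
so `θ x = φ ⇀ x - x ↼ φ` satisfies `Δ(θ x) = θ x₁ ⊗ x₂ + x₁ ⊗ θ x₂`; counitality gives
`ε(θ x) = φ x - φ x = 0`. Hence the span of the images of all `θ` is a coideal.
-/

open LinearMap Coalgebra

section TensorProduct

variable {R M N P Q : Type*} [CommSemiring R] [AddCommMonoid M] [Module R M]
  [AddCommMonoid N] [Module R N] [AddCommMonoid P] [Module R P] [AddCommMonoid Q] [Module R Q]

lemma TensorProduct.map_lid_comp_left (f : P →ₗ[R] R ⊗[R] M) (g : Q →ₗ[R] N) :
    map ((TensorProduct.lid R M).toLinearMap ∘ₗ f) g =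
      (TensorProduct.lid R (M ⊗[R] N)).toLinearMap ∘ₗ
        (TensorProduct.assoc R R M N).toLinearMap ∘ₗ map f g := by
  have h : map (TensorProduct.lid R M).toLinearMap (LinearMap.id : N →ₗ[R] N) =
      (TensorProduct.lid R (M ⊗[R] N)).toLinearMap ∘ₗ
        (TensorProduct.assoc R R M N).toLinearMap := by
    ext; simp
  rw [← id_comp g, map_comp, id_comp, h, comp_assoc]

lemma TensorProduct.map_rid_comp_right (f : P →ₗ[R] M ⊗[R] R) (g : Q →ₗ[R] N) :
    map g ((TensorProduct.rid R M).toLinearMap ∘ₗ f) =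
      (TensorProduct.rid R (N ⊗[R] M)).toLinearMap ∘ₗ
        (TensorProduct.assoc R N M R).symm.toLinearMap ∘ₗ map g f := by
  have h : map (LinearMap.id : N →ₗ[R] N) (TensorProduct.rid R M).toLinearMap =
      (TensorProduct.rid R (N ⊗[R] M)).toLinearMap ∘ₗ
        (TensorProduct.assoc R N M R).symm.toLinearMap := by
    ext; simp
  rw [← id_comp g, map_comp, id_comp, h, comp_assoc]

lemma TensorProduct.map_rid_comp_left (f : P →ₗ[R] M ⊗[R] R) (g : Q →ₗ[R] N) :
    map ((TensorProduct.rid R M).toLinearMap ∘ₗ f) g =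
      map LinearMap.id (TensorProduct.lid R N).toLinearMap ∘ₗ
        (TensorProduct.assoc R M R N).toLinearMap ∘ₗ map f g := by
  have h : map (TensorProduct.rid R M).toLinearMap (LinearMap.id : N →ₗ[R] N) =
      map LinearMap.id (TensorProduct.lid R N).toLinearMap ∘ₗ
        (TensorProduct.assoc R M R N).toLinearMap := by
    ext; simp
  rw [← id_comp g, map_comp, id_comp, h, comp_assoc]

lemma LinearMap.rTensor_mem_range_rTensor_subtype {I : Submodule R N} {θ : M →ₗ[R] N}
    (hθ : ∀ x, θ x ∈ I) (t : M ⊗[R] P) :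
    θ.rTensor P t ∈ range (I.subtype.rTensor P) :=
  ⟨(θ.codRestrict I hθ).rTensor P t, by
    rw [← comp_apply, ← rTensor_comp, subtype_comp_codRestrict]⟩

lemma LinearMap.lTensor_mem_range_lTensor_subtype {I : Submodule R N} {θ : M →ₗ[R] N}
    (hθ : ∀ x, θ x ∈ I) (t : P ⊗[R] M) :
    θ.lTensor P t ∈ range (I.subtype.lTensor P) :=
  ⟨(θ.codRestrict I hθ).lTensor P t, by
    rw [← comp_apply, ← lTensor_comp, subtype_comp_codRestrict]⟩

end TensorProduct

section CommSemiring

variable {R C : Type*} [CommSemiring R] [AddCommMonoid C] [Module R C] [Coalgebra R C]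

/-- `φ ⇀ x = φ(x₁) x₂`. -/
noncomputable def leftHit (φ : C →ₗ[R] R) : C →ₗ[R] C :=
  (TensorProduct.lid R C).toLinearMap ∘ₗ φ.rTensor C ∘ₗ comul

/-- `x ↼ φ = φ(x₂) x₁`. -/
noncomputable def rightHit (φ : C →ₗ[R] R) : C →ₗ[R] C :=
  (TensorProduct.rid R C).toLinearMap ∘ₗ φ.lTensor C ∘ₗ comul

variable (φ : C →ₗ[R] R)

lemma counit_comp_leftHit : counit ∘ₗ leftHit φ = φ := by
  rw [leftHit, rTensor_def, ← CoassocSimps.lid_comp_map_assoc,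
    CoassocSimps.map_counit_comp_comul_right]
  ext; simp

lemma counit_comp_rightHit : counit ∘ₗ rightHit φ = φ := by
  rw [rightHit, lTensor_def, ← CoassocSimps.rid_comp_map_assoc,
    CoassocSimps.map_counit_comp_comul_left]
  ext; simp

lemma comul_comp_leftHit : comul ∘ₗ leftHit φ = (leftHit φ).rTensor C ∘ₗ comul := by
  simp only [leftHit, coassoc_simps, map_lid_comp_left]

lemma comul_comp_rightHit : comul ∘ₗ rightHit φ = (rightHit φ).lTensor C ∘ₗ comul := by
  simp only [rightHit, coassoc_simps, map_rid_comp_right]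

lemma rTensor_rightHit_comp_comul :
    (rightHit φ).rTensor C ∘ₗ comul = (leftHit φ).lTensor C ∘ₗ comul := by
  simp only [leftHit, rightHit, coassoc_simps, map_rid_comp_left]

end CommSemiring

section CommRing

variable {R C : Type*} [CommRing R] [AddCommGroup C] [Module R C] [Coalgebra R C]

noncomputable def lazyMap (φ : C →ₗ[R] R) : C →ₗ[R] C :=
  leftHit φ - rightHit φ

lemma counit_comp_lazyMap (φ : C →ₗ[R] R) : counit ∘ₗ lazyMap φ = 0 := by
  rw [lazyMap, comp_sub, counit_comp_leftHit, counit_comp_rightHit, sub_self]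

lemma comul_comp_lazyMap (φ : C →ₗ[R] R) :
    comul ∘ₗ lazyMap φ = (lazyMap φ).rTensor C ∘ₗ comul + (lazyMap φ).lTensor C ∘ₗ comul := by
  rw [lazyMap, comp_sub, comul_comp_leftHit, comul_comp_rightHit, rTensor_sub, lTensor_sub,
    sub_comp, sub_comp, rTensor_rightHit_comp_comul]
  abel

lemma Submodule.isCoideal_iSup_range {ι : Type*} (θ : ι → C →ₗ[R] C)
    (hε : ∀ i, counit ∘ₗ θ i = 0)
    (hΔ : ∀ i, comul ∘ₗ θ i = (θ i).rTensor C ∘ₗ comul + (θ i).lTensor C ∘ₗ comul) :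
    (⨆ i, range (θ i)).IsCoideal := by
  set I := ⨆ i, range (θ i)
  have hθI (i : ι) (x : C) : θ i x ∈ I :=
    Submodule.mem_iSup_of_mem i (mem_range_self _ x)
  let J : Submodule R C := ker (counit (R := R) (A := C)) ⊓
    (range (I.subtype.lTensor C) ⊔ range (I.subtype.rTensor C)).comap comul
  suffices I ≤ J from
    I.isCoideal_iff_comul_mem.mpr ⟨fun y hy ↦ (this hy).1, fun y hy ↦ (this hy).2⟩
  refine iSup_le fun i ↦ ?_
  rintro _ ⟨x, rfl⟩
  refine Submodule.mem_inf.mpr ⟨congr($(hε i) x), Submodule.mem_comap.mpr ?_⟩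
  rw [← comp_apply, hΔ i, LinearMap.add_apply, add_comm]
  exact Submodule.add_mem_sup (lTensor_mem_range_lTensor_subtype (hθI i) _)
    (rTensor_mem_range_rTensor_subtype (hθI i) _)

end CommRing

lemma lazySubspace_eq_iSup_range_lazyMap (k : Type*) [Field k] (C : Type*)
    [AddCommGroup C] [Module k C] [Coalgebra k C] :
    lazySubspace k C = ⨆ φ : C →ₗ[k] k, range (lazyMap φ) := by
  rw [Submodule.iSup_eq_span, lazySubspace]
  congr 1
  ext y
  simp only [Set.mem_ofPred_eq, Set.mem_iUnion, SetLike.mem_coe, mem_range]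
  rw [exists_comm]
  exact exists_congr fun φ ↦ exists_congr fun x ↦ eq_comm

instance (k : Type*) [Field k] (C : Type*) [AddCommGroup C] [Module k C] [Coalgebra k C] :
    (lazySubspace k C).IsCoideal := by
  rw [lazySubspace_eq_iSup_range_lazyMap]
  exact Submodule.isCoideal_iSup_range lazyMap counit_comp_lazyMap comul_comp_lazyMap

theorem lazySubspace_isCoideal (k : Type*) [Field k] (C : Type*)
    [AddCommGroup C] [Module k C] [Coalgebra k C] :
    ∀ y ∈ lazySubspace k C,
      Coalgebra.counit (R := k) y = 0 ∧
      Coalgebra.comul (R := k) y ∈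
        LinearMap.range (TensorProduct.map (lazySubspace k C).subtype
          (LinearMap.id : C →ₗ[k] C)) ⊔
        LinearMap.range (TensorProduct.map (LinearMap.id : C →ₗ[k] C)
          (lazySubspace k C).subtype) := by
  obtain ⟨hε, hΔ⟩ := (lazySubspace k C).isCoideal_iff_comul_mem.mp inferInstance
  intro y hy
  refine ⟨hε y hy, ?_⟩
  rw [sup_comm]
  exact hΔ y hy
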